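/- With D₀ = [[1,2],[0,0]] and D₁ = [[1,2],[1,0]], e₀ = (1,0)ᵀ and w = (1,2)ᵀ, for every n ≥ 1 with binary expansion n_{k-1}...n₁n₀, the quantity wᵀ D_{n_{k-1}} ⋯ D_{n₀} e₀ equals the number of odd coefficients of (1+x+x^2)^n. -/

import Mathlib

/-!
Modulo 2, `f = 1 + X + X²` satisfies `f ^ (2m) = f ^ m (X²)` and `f ^ (2m+1) = f ^ m (X²) · f`.
Write `N p` for the number of nonzero coefficients of `p`. All counting rests on
`N (a(X²) + X · b(X²)) = N a + N b`, applied to `p(X²) · f = ((1 + X) p)(X²) + X · p(X²)` and,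
since `(1 + X) f = 1 + X³` in characteristic 2, to `(1 + X) · p(X²) · f = p(X²) + X · (X p)(X²)`.
Hence the row vector `(N p, N ((1 + X) p))` is multiplied on the right by `D 0` under
`p ↦ p(X²)` and by `D 1` under `p ↦ p(X²) · f`. It equals `(1, 2)` at `p = 1`, so reading the
binary digits of `n` from the top gives
`(1, 2) · D_{n_{k-1}} ⋯ D_{n₀} = (N (f ^ n), N ((1 + X) f ^ n))`, whose first entry is `g n`.
-/

open Polynomial

/-- The number of odd coefficients of a polynomial over ℤ. -/
noncomputable def oddCoeffCount (p : Polynomial ℤ) : ℕ :=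
  (p.support.filter fun j => Odd (p.coeff j)).card

noncomputable def g (n : ℕ) : ℕ := oddCoeffCount ((1 + X + X ^ 2) ^ n)

def D : ℕ → Matrix (Fin 2) (Fin 2) ℤ
  | 0 => !![1, 2; 0, 0]
  | _ => !![1, 2; 1, 0]

open Finset Matrix

theorem vecMul_D_zero (a b : ℤ) : ![a, b] ᵥ* D 0 = ![a, 2 * a] := by
  ext i
  fin_cases i <;> simp [D, vecMul, dotProduct, mul_comm]

theorem vecMul_D_one (a b : ℤ) : ![a, b] ᵥ* D 1 = ![a + b, 2 * a] := by
  ext i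
  fin_cases i <;> simp [D, vecMul, dotProduct, mul_comm]

namespace Polynomial

theorem card_support_X_mul {R : Type*} [Semiring R] (p : R[X]) :
    #(X * p).support = #p.support := by
  calc #(X * p).support = #(p.support.map (addRightEmbedding 1)) := by
        congr 1
        ext (_ | k) <;> simp [coeff_X_mul]
    _ = #p.support := card_map _

section CommSemiring

variable {R : Type*} [CommSemiring R] (a b : R[X])

theorem coeff_expand_two_add_X_mul_expand_two_even (j : ℕ) :
    (expand R 2 a + X * expand R 2 b).coeff (2 * j) = a.coeff j := by
  rcases j with _ | j
  · simp [coeff_expand two_pos]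
  · rw [coeff_add, coeff_expand_mul' two_pos, show 2 * (j + 1) = 2 * j + 1 + 1 by ring,
      coeff_X_mul, coeff_expand two_pos, if_neg (by omega), add_zero]

theorem coeff_expand_two_add_X_mul_expand_two_odd (j : ℕ) :
    (expand R 2 a + X * expand R 2 b).coeff (2 * j + 1) = b.coeff j := by
  rw [coeff_add, coeff_X_mul, coeff_expand_mul' two_pos, coeff_expand two_pos,
    if_neg (by omega), zero_add]

theorem support_expand_two_add_X_mul_expand_two :
    (expand R 2 a + X * expand R 2 b).support =
      a.support.image (2 * ·) ∪ b.support.image (2 * · + 1) := by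
  ext k
  obtain ⟨j, rfl | rfl⟩ := Nat.even_or_odd' k <;>
    simp only [mem_support_iff, coeff_expand_two_add_X_mul_expand_two_even,
      coeff_expand_two_add_X_mul_expand_two_odd, mem_union, mem_image] <;>
    grind

theorem card_support_expand_two_add_X_mul_expand_two :
    #(expand R 2 a + X * expand R 2 b).support = #a.support + #b.support := by
  rw [support_expand_two_add_X_mul_expand_two, card_union_of_disjoint,
    card_image_of_injective _ (mul_right_injective₀ two_ne_zero),
    card_image_of_injective _ fun i j h => by simpa using h]
  simp only [disjoint_left, mem_image]
  omega

theorem card_support_expand_two : #(expand R 2 a).support = #a.support := by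
  simpa using card_support_expand_two_add_X_mul_expand_two a 0

end CommSemiring

noncomputable def supportCardPair {R : Type*} [Semiring R] (p : R[X]) : Fin 2 → ℤ :=
  ![#p.support, #((1 + X) * p).support]

theorem supportCardPair_one {R : Type*} [Semiring R] [Nontrivial R] :
    supportCardPair (1 : R[X]) = ![1, 2] := by
  have hone : #(1 : R[X]).support = 1 := by
    rw [← C_1, support_C one_ne_zero, card_singleton]
  have hbinomial : #(1 + X : R[X]).support = 2 := by
    simpa using card_support_binomial (R := R) zero_ne_one one_ne_zero one_ne_zero
  simp [supportCardPair, hone, hbinomial]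

theorem supportCardPair_expand_two {R : Type*} [CommSemiring R] (p : R[X]) :
    supportCardPair (expand R 2 p) = supportCardPair p ᵥ* D 0 := by
  have hsplit : (1 + X) * expand R 2 p = expand R 2 p + X * expand R 2 p := by ring
  rw [supportCardPair, supportCardPair, vecMul_D_zero, hsplit,
    card_support_expand_two_add_X_mul_expand_two, card_support_expand_two]
  push_cast
  ring_nf

theorem supportCardPair_expand_two_mul {R : Type*} [CommRing R] [CharP R 2] (p : R[X]) :
    supportCardPair (expand R 2 p * (1 + X + X ^ 2)) = supportCardPair p ᵥ* D 1 := by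
  have htwo : (2 : R[X]) = 0 := CharP.cast_eq_zero R[X] 2
  have hsplit : expand R 2 p * (1 + X + X ^ 2) = expand R 2 ((1 + X) * p) + X * expand R 2 p := by
    rw [map_mul, map_add, map_one, expand_X]; ring
  have hsplit_one_add_X_mul : (1 + X) * (expand R 2 p * (1 + X + X ^ 2)) =
      expand R 2 p + X * expand R 2 (X * p) := by
    rw [map_mul, expand_X]; linear_combination (X + X ^ 2) * expand R 2 p * htwo
  rw [supportCardPair, supportCardPair, vecMul_D_one, hsplit_one_add_X_mul, hsplit,
    card_support_expand_two_add_X_mul_expand_two, card_support_expand_two_add_X_mul_expand_two,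
    card_support_X_mul]
  push_cast
  ring_nf

end Polynomial

theorem Nat.prod_map_reverse_digits {M : Type*} [Monoid M] (f : ℕ → M) {b n : ℕ} (hb : 1 < b)
    (hn : 0 < n) :
    ((Nat.digits b n).reverse.map f).prod =
      ((Nat.digits b (n / b)).reverse.map f).prod * f (n % b) := by
  simp [Nat.digits_def' hb hn]

theorem ZMod.pow_mul_eq_expand {p : ℕ} [Fact p.Prime] (f : (ZMod p)[X]) (m : ℕ) :
    f ^ (p * m) = expand (ZMod p) p (f ^ m) := by
  rw [pow_mul', ZMod.expand_card]

theorem vecMul_prod_map_reverse_digits_D (n : ℕ) :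
    ![1, 2] ᵥ* ((Nat.digits 2 n).reverse.map D).prod =
      supportCardPair ((1 + X + X ^ 2 : (ZMod 2)[X]) ^ n) := by
  induction n using Nat.strong_induction_on with
  | _ n ih =>
  rcases n.eq_zero_or_pos with rfl | hn
  · simp [supportCardPair_one]
  · rw [Nat.prod_map_reverse_digits D one_lt_two hn, ← vecMul_vecMul, ih (n / 2) (by omega)]
    obtain ⟨m, rfl | rfl⟩ := Nat.even_or_odd' n
    · rw [show 2 * m / 2 = m by omega, Nat.mul_mod_right, ZMod.pow_mul_eq_expand,
        supportCardPair_expand_two]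
    · rw [show (2 * m + 1) / 2 = m by omega, show (2 * m + 1) % 2 = 1 by omega, pow_succ _ (2 * m),
        ZMod.pow_mul_eq_expand, supportCardPair_expand_two_mul]

theorem oddCoeffCount_eq_card_support_map (p : ℤ[X]) :
    oddCoeffCount p = #(p.map (Int.castRingHom (ZMod 2))).support := by
  unfold oddCoeffCount
  congr 1
  ext j
  simp only [mem_filter, mem_support_iff, coeff_map, eq_intCast, ne_eq,
    ZMod.intCast_eq_zero_iff_even, Int.not_even_iff_odd]
  exact ⟨And.right, fun h => ⟨fun h0 => by simp [h0] at h, h⟩⟩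

theorem stmt_19_general (n : ℕ) :
    dotProduct ![1, 2]
      ((((Nat.digits 2 n).reverse.map D).prod).mulVec ![1, 0]) = g n := by
  rw [dotProduct_mulVec, vecMul_prod_map_reverse_digits_D, g, oddCoeffCount_eq_card_support_map]
  simp [supportCardPair]

theorem stmt_19 (n : ℕ) (hn : 1 ≤ n) :
    dotProduct ![1, 2]
      ((((Nat.digits 2 n).reverse.map D).prod).mulVec ![1, 0]) = g n :=
  stmt_19_general n
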